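/- Let X and K be real Hilbert spaces, f ∈ Γ₀(X), and A : X → K a bounded linear operator with ‖A‖_op < 1. Set S_pLAL := argmin_{x∈X}(f(x) + ι_{{0}}(Ax)) and S_dLAL := argmin_{ν∈K} f*(A*ν), and assume S_pLAL ≠ ∅, S_dLAL ≠ ∅, and min_{x∈X}(f(x) + ι_{{0}}(Ax)) = −min_{ν∈K} f*(A*ν). Define T_LAL(x, ν) := (x_T, ν_T) by x_T := prox_f(x − A*Ax + A*ν) and ν_T := ν − A x_T. Then, for any initial point (x₀, ν₀) ∈ X × K, the sequence generated by (x_{n+1}, ν_{n+1}) = T_LAL(x_n, ν_n) converges weakly to a point in S_pLAL × S_dLAL. -/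

import Mathlib

/-!
Attainment and zero duality gap produce a KKT pair `(x̄, ν̄)`: `A x̄ = 0` and `A* ν̄ ∈ ∂f(x̄)`.
Monotonicity of `∂f`, applied to the subgradient `u - prox_f u ∈ ∂f(prox_f u)` of the
proximal step, makes the iteration Fejér monotone towards every KKT pair in the quadratic form
`‖x - x̄‖² - ‖A x‖² + ‖ν - ν̄‖²`, nonnegative since `‖A‖ < 1`, with a decrease of at least
`(1 - ‖A‖²)‖x_{n+1} - x_n‖² + ‖A x_{n+1}‖²`. Hence `x_{n+1} - x_n → 0` and `A x_n → 0`, so the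
product-norm distance to every KKT pair converges. Passing to the limit in the subgradient
inequality, with the weak lower semicontinuity of `f`, shows that weak cluster points are KKT
pairs, and Opial's lemma gives weak convergence. KKT pairs solve the primal and dual problems.
-/

noncomputable section

open Filter Topology Bornology
open scoped InnerProductSpace Pointwise Classical

/-- A function with values in the extended reals is *proper* if it is somewhere finite
and nowhere `⊥`. -/
def EProper {H : Type*} (f : H → EReal) : Prop :=
  (∃ x, f x ≠ ⊤) ∧ ∀ x, f x ≠ ⊥

/-- Convexity for extended-real-valued functions. -/
def EConvex {H : Type*} [AddCommGroup H] [Module ℝ H] (f : H → EReal) : Prop :=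
  ∀ x y : H, ∀ a b : ℝ, 0 ≤ a → 0 ≤ b → a + b = 1 →
    f (a • x + b • y) ≤ (a : EReal) * f x + (b : EReal) * f y

/-- The class `Γ₀(H)` of proper lower semicontinuous convex functions `H → (-∞, +∞]`. -/
def Gamma0 {H : Type*} [NormedAddCommGroup H] [NormedSpace ℝ H] (f : H → EReal) : Prop :=
  EProper f ∧ LowerSemicontinuous f ∧ EConvex f

/-- Effective domain `dom f = {x | f x < ∞}`. -/
def edom {H : Type*} (f : H → EReal) : Set H := {x | f x ≠ ⊤}

/-- Set of global minimizers of `f`. -/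
def argminSet {H : Type*} (f : H → EReal) : Set H := {x | ∀ y, f x ≤ f y}

/-- Fenchel conjugate `f*(u) = sup_x (⟪x,u⟫ - f x)`. -/
def econj {H : Type*} [NormedAddCommGroup H] [InnerProductSpace ℝ H]
    (f : H → EReal) (u : H) : EReal :=
  ⨆ x : H, ((⟪x, u⟫_ℝ : EReal) - f x)

/-- Subdifferential `∂f(x) = {u | ∀ y, ⟪y - x, u⟫ + f x ≤ f y}`. -/
def esubdiff {H : Type*} [NormedAddCommGroup H] [InnerProductSpace ℝ H]
    (f : H → EReal) (x : H) : Set H :=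
  {u | ∀ y : H, ((⟪y - x, u⟫_ℝ : ℝ) : EReal) + f x ≤ f y}

/-- `p` is the proximal point of `f` at `x`, i.e. a minimizer of
`y ↦ f y + (1/2)‖y - x‖²` (which is unique for `f ∈ Γ₀`). -/
def IsProxPt {H : Type*} [NormedAddCommGroup H] (f : H → EReal) (x p : H) : Prop :=
  ∀ y : H, f p + ((((1:ℝ)/2) * ‖p - x‖ ^ 2 : ℝ) : EReal)
    ≤ f y + ((((1:ℝ)/2) * ‖y - x‖ ^ 2 : ℝ) : EReal)

/-- Indicator function of a set, with values in the extended reals. -/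
def eind {H : Type*} (C : Set H) : H → EReal := fun x => if x ∈ C then 0 else ⊤

/-- Strong relative interior: the points `x ∈ C` such that the cone generated by `C - x`
coincides with the closed linear span of `C - x`. -/
def sriSet {H : Type*} [NormedAddCommGroup H] [NormedSpace ℝ H] (C : Set H) : Set H :=
  {x | x ∈ C ∧
    {y | ∃ t : ℝ, 0 < t ∧ ∃ c ∈ C, y = t • (c - x)} =
      closure ((Submodule.span ℝ ((fun c => c - x) '' C) : Submodule ℝ H) : Set H)}

section WeakConvergence

variable {ι E F : Type*} [NormedAddCommGroup E] [InnerProductSpace ℝ E]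
  [NormedAddCommGroup F] [InnerProductSpace ℝ F] {l : Filter ι} {z z' : ι → E} {w w' : E}

def WeakTendsto (z : ι → E) (l : Filter ι) (w : E) : Prop :=
  ∀ v, Tendsto (fun i => ⟪z i, v⟫_ℝ) l (𝓝 ⟪w, v⟫_ℝ)

lemma Ultrafilter.exists_tendsto_of_eventually_abs_le (U : Ultrafilter ι) {g : ι → ℝ}
    {C : ℝ} (hg : ∀ᶠ i in U, |g i| ≤ C) : ∃ a, Tendsto g U (𝓝 a) := by
  obtain ⟨a, -, ha⟩ := isCompact_Icc.ultrafilter_le_nhds (U.map g)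
    (le_principal_iff.2 (hg.mono fun _ => abs_le.1))
  exact ⟨a, ha⟩

lemma tendsto_inner_zero_of_tendsto_norm_zero {a b : ι → E} {C : ℝ}
    (ha : Tendsto (fun i => ‖a i‖) l (𝓝 0)) (hb : ∀ᶠ i in l, ‖b i‖ ≤ C) :
    Tendsto (fun i => ⟪a i, b i⟫_ℝ) l (𝓝 0) :=
  squeeze_zero_norm' (hb.mono fun i hi => (norm_inner_le_norm _ _).trans
    (mul_le_mul_of_nonneg_left hi (norm_nonneg _))) (by simpa using ha.mul_const C)

lemma Ultrafilter.exists_weakTendsto_of_eventually_norm_le [CompleteSpace E] (U : Ultrafilter ι)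
    {C : ℝ} (hz : ∀ᶠ i in U, ‖z i‖ ≤ C) : ∃ w, WeakTendsto z U w := by
  have hbound : ∀ v, ∀ᶠ i in U, |⟪z i, v⟫_ℝ| ≤ C * ‖v‖ := fun v =>
    hz.mono fun i hi => (abs_real_inner_le_norm _ _).trans
      (mul_le_mul_of_nonneg_right hi (norm_nonneg v))
  choose L hL using fun v => U.exists_tendsto_of_eventually_abs_le (hbound v)
  let φ : E →L[ℝ] ℝ := LinearMap.mkContinuous
    { toFun := L
      map_add' := fun v v' => tendsto_nhds_unique
        (by simpa only [inner_add_right] using hL (v + v')) ((hL v).add (hL v'))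
      map_smul' := fun c v => tendsto_nhds_unique
        (by simpa only [inner_smul_right] using hL (c • v)) ((hL v).const_mul c) }
    C fun v => le_of_tendsto (hL v).abs (hbound v)
  refine ⟨(InnerProductSpace.toDual ℝ E).symm φ, fun v => ?_⟩
  rw [InnerProductSpace.toDual_symm_apply]
  exact hL v

lemma WeakTendsto.tendsto_apply [CompleteSpace E] (h : WeakTendsto z l w) (φ : E →L[ℝ] ℝ) :
    Tendsto (fun i => φ (z i)) l (𝓝 (φ w)) := by
  have hφ : ∀ x, ⟪x, (InnerProductSpace.toDual ℝ E).symm φ⟫_ℝ = φ x := fun x => by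
    rw [real_inner_comm, InnerProductSpace.toDual_symm_apply]
  simpa only [hφ] using h ((InnerProductSpace.toDual ℝ E).symm φ)

lemma WeakTendsto.map [CompleteSpace E] [CompleteSpace F] (h : WeakTendsto z l w)
    (A : E →L[ℝ] F) : WeakTendsto (fun i => A (z i)) l (A w) := fun v => by
  simpa only [ContinuousLinearMap.adjoint_inner_right] using h (A.adjoint v)

lemma WeakTendsto.unique [l.NeBot] (h : WeakTendsto z l w) (h' : WeakTendsto z l w') :
    w = w' := by
  have hzero : ⟪w - w', w - w'⟫_ℝ = 0 := by
    rw [inner_sub_left, tendsto_nhds_unique (h _) (h' _), sub_self]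
  exact sub_eq_zero.1 (inner_self_eq_zero.1 hzero)

lemma WeakTendsto.congr_of_tendsto_norm_sub (h : WeakTendsto z l w)
    (hzz' : Tendsto (fun i => ‖z' i - z i‖) l (𝓝 0)) : WeakTendsto z' l w := fun v => by
  have := (h v).add (tendsto_inner_zero_of_tendsto_norm_zero hzz' (C := ‖v‖)
    (Eventually.of_forall fun _ => le_rfl))
  simpa only [← inner_add_left, add_sub_cancel, add_zero] using this

lemma weakTendsto_of_tendsto_norm_sub (h : Tendsto (fun i => ‖z i - w‖) l (𝓝 0)) :
    WeakTendsto z l w :=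
  WeakTendsto.congr_of_tendsto_norm_sub (fun _ => tendsto_const_nhds) h

lemma WeakTendsto.fst {z : ι → WithLp 2 (E × F)} {w : WithLp 2 (E × F)}
    (h : WeakTendsto z l w) :
    WeakTendsto (fun i => (z i).fst) l w.fst := fun v => by
  simpa using h (WithLp.toLp 2 (v, 0))

lemma WeakTendsto.snd {z : ι → WithLp 2 (E × F)} {w : WithLp 2 (E × F)}
    (h : WeakTendsto z l w) :
    WeakTendsto (fun i => (z i).snd) l w.snd := fun v => by
  simpa using h (WithLp.toLp 2 (0, v))

lemma Convex.mem_of_weakTendsto [CompleteSpace E] [l.NeBot] {C : Set E} (hC : Convex ℝ C)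
    (hCc : IsClosed C) (h : WeakTendsto z l w) (hz : ∀ᶠ i in l, z i ∈ C) : w ∈ C := by
  by_contra hw
  obtain ⟨φ, u, hφC, hφw⟩ := geometric_hahn_banach_closed_point hC hCc hw
  have := le_of_tendsto (h.tendsto_apply φ) (hz.mono fun i hi => (hφC _ hi).le)
  linarith

lemma WeakTendsto.eq_of_tendsto_norm_sub {U U' : Filter ι} [U.NeBot] [U'.NeBot] (hU : U ≤ l)
    (hU' : U' ≤ l) (h : WeakTendsto z U w) (h' : WeakTendsto z U' w') {r r' : ℝ}
    (hr : Tendsto (fun i => ‖z i - w‖) l (𝓝 r))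
    (hr' : Tendsto (fun i => ‖z i - w'‖) l (𝓝 r')) :
    w = w' := by
  have hpolar : ∀ i, ⟪z i, w - w'⟫_ℝ
      = (‖z i - w'‖ ^ 2 - ‖z i - w‖ ^ 2 + ‖w‖ ^ 2 - ‖w'‖ ^ 2) / 2 := fun i => by
    rw [norm_sub_sq_real, norm_sub_sq_real, inner_sub_right]; ring
  have hlim : Tendsto (fun i => ⟪z i, w - w'⟫_ℝ) l
      (𝓝 ((r' ^ 2 - r ^ 2 + ‖w‖ ^ 2 - ‖w'‖ ^ 2) / 2)) := by
    simp only [hpolar]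
    exact ((((hr'.pow 2).sub (hr.pow 2)).add_const _).sub_const _).div_const 2
  have e := tendsto_nhds_unique (h _) (hlim.mono_left hU)
  have e' := tendsto_nhds_unique (h' _) (hlim.mono_left hU')
  have hzero : ⟪w - w', w - w'⟫_ℝ = 0 := by rw [inner_sub_left, e, e', sub_self]
  exact sub_eq_zero.1 (inner_self_eq_zero.1 hzero)

/-- **Opial's lemma**, with weak cluster points taken along ultrafilters. -/
theorem exists_weakTendsto_of_opial [CompleteSpace E] [l.NeBot] {S : Set E} (hS : S.Nonempty)
    (hdist : ∀ w ∈ S, ∃ r, Tendsto (fun i => ‖z i - w‖) l (𝓝 r))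
    (hcluster : ∀ (U : Ultrafilter ι) w, ↑U ≤ l → WeakTendsto z U w → w ∈ S) :
    ∃ w ∈ S, WeakTendsto z l w := by
  obtain ⟨w₀, hw₀⟩ := hS
  obtain ⟨r₀, hr₀⟩ := hdist w₀ hw₀
  have hbdd : ∀ᶠ i in l, ‖z i‖ ≤ r₀ + 1 + ‖w₀‖ :=
    (hr₀.eventually (gt_mem_nhds (lt_add_one r₀))).mono fun i hi => by
      linarith [norm_le_norm_sub_add (z i) w₀]
  have hexists : ∀ U : Ultrafilter ι, ↑U ≤ l → ∃ w ∈ S, WeakTendsto z U w := by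
    intro U hU
    obtain ⟨w, hw⟩ := U.exists_weakTendsto_of_eventually_norm_le (hU hbdd)
    exact ⟨w, hcluster U w hU hw, hw⟩
  obtain ⟨w, hwS, hw⟩ := hexists (Ultrafilter.of l) (Ultrafilter.of_le l)
  obtain ⟨r, hr⟩ := hdist w hwS
  refine ⟨w, hwS, fun v => (tendsto_iff_ultrafilter _ _ _).2 fun U hU => ?_⟩
  obtain ⟨w', hw'S, hw'⟩ := hexists U hU
  obtain ⟨r', hr'⟩ := hdist w' hw'S
  rw [hw.eq_of_tendsto_norm_sub (Ultrafilter.of_le l) hU hw' hr hr']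
  exact hw' v

end WeakConvergence

section ConvexAnalysis

variable {E : Type*} [NormedAddCommGroup E] {f : E → EReal} {x y u v : E}

lemma IsProxPt.ne_top (hf : EProper f) (h : IsProxPt f x u) : f u ≠ ⊤ := by
  obtain ⟨⟨y, hy⟩, hbot⟩ := hf
  intro hu
  have := h y
  lift f y to ℝ using ⟨hy, hbot y⟩ with b
  rw [hu, EReal.top_add_of_ne_bot (EReal.coe_ne_bot _), top_le_iff, ← EReal.coe_add] at this
  exact EReal.coe_ne_top _ this

variable [InnerProductSpace ℝ E]

lemma EProper.ne_top_of_mem_esubdiff (hf : EProper f) (hu : u ∈ esubdiff f x) : f x ≠ ⊤ := by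
  obtain ⟨⟨y, hy⟩, -⟩ := hf
  intro hx
  have := hu y
  rw [hx, EReal.coe_add_top, top_le_iff] at this
  exact hy this

lemma le_coe_sub_inner_of_mem_esubdiff {b : ℝ} (hu : u ∈ esubdiff f x) (hy : f y = b) :
    f x ≤ ↑(b - ⟪y - x, u⟫_ℝ) := by
  have := hu y
  rw [hy] at this
  rw [EReal.coe_sub, EReal.le_sub_iff_add_le (.inl (EReal.coe_ne_bot _))
    (.inl (EReal.coe_ne_top _)), add_comm]
  exact this

lemma EProper.inner_sub_sub_nonneg_of_mem_esubdiff (hf : EProper f) (hu : u ∈ esubdiff f x)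
    (hv : v ∈ esubdiff f y) : 0 ≤ ⟪x - y, u - v⟫_ℝ := by
  have hux := hu y
  have hvy := hv x
  lift f x to ℝ using ⟨hf.ne_top_of_mem_esubdiff hu, hf.2 x⟩ with a
  lift f y to ℝ using ⟨hf.ne_top_of_mem_esubdiff hv, hf.2 y⟩ with b
  norm_cast at hux hvy
  rw [← neg_sub x y, inner_neg_left] at hux
  rw [inner_sub_right]
  linarith

/-- Comparing the proximal point `p` with `p + t (y - p)`, using convexity along that segment. -/
lemma IsProxPt.le_add_inner_add_mul (hconv : EConvex f) {p : E} (h : IsProxPt f x p)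
    {a b t : ℝ} (hp : f p = a) (hy : f y = b) (ht₀ : 0 < t) (ht₁ : t ≤ 1) :
    a ≤ b + ⟪p - x, y - p⟫_ℝ + t / 2 * ‖y - p‖ ^ 2 := by
  have hseg := hconv p y (1 - t) t (by linarith) ht₀.le (by ring)
  have hprox := h ((1 - t) • p + t • y)
  rw [hp, hy] at hseg
  rw [hp] at hprox
  have hcomb := hprox.trans (add_le_add_left hseg _)
  norm_cast at hcomb
  have hvec : (1 - t) • p + t • y - x = (p - x) + t • (y - p) := by module
  rw [hvec, norm_add_sq_real, real_inner_smul_right, norm_smul, Real.norm_eq_abs, mul_pow,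
    sq_abs] at hcomb
  nlinarith

lemma IsProxPt.sub_mem_esubdiff (hf : EProper f) (hconv : EConvex f) {p : E}
    (h : IsProxPt f x p) : x - p ∈ esubdiff f p := by
  intro y
  lift f p to ℝ using ⟨h.ne_top hf, hf.2 p⟩ with a hp
  rcases eq_or_ne (f y) ⊤ with hy | hy
  · rw [hy]; exact le_top
  lift f y to ℝ using ⟨hy, hf.2 y⟩ with b hb
  set g : ℝ → ℝ := fun t => b + ⟪p - x, y - p⟫_ℝ + t / 2 * ‖y - p‖ ^ 2
  have hlim : Tendsto g (𝓝[>] 0) (𝓝 (b + ⟪p - x, y - p⟫_ℝ)) := by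
    have hg : Continuous g := by fun_prop
    simpa [g] using (hg.tendsto 0).mono_left nhdsWithin_le_nhds
  have hle : a ≤ b + ⟪p - x, y - p⟫_ℝ :=
    ge_of_tendsto hlim (eventually_of_mem (Ioc_mem_nhdsGT one_pos) fun t ht =>
      h.le_add_inner_add_mul hconv hp.symm hb.symm ht.1 ht.2)
  have hflip : ⟪y - p, x - p⟫_ℝ = -⟪p - x, y - p⟫_ℝ := by
    rw [real_inner_comm, ← inner_neg_left, neg_sub]
  norm_cast
  linarith

lemma le_econj (f : E → EReal) (x u : E) : ↑⟪x, u⟫_ℝ - f x ≤ econj f u :=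
  le_iSup (fun x => (⟪x, u⟫_ℝ : EReal) - f x) x

lemma EProper.mem_esubdiff_iff_econj_le (hf : EProper f) (hx : f x ≠ ⊤) :
    u ∈ esubdiff f x ↔ econj f u ≤ ↑⟪x, u⟫_ℝ - f x := by
  rw [econj, iSup_le_iff]
  refine forall_congr' fun y => ?_
  lift f x to ℝ using ⟨hx, hf.2 x⟩ with a
  rcases eq_or_ne (f y) ⊤ with hy | hy
  · simp [hy]
  lift f y to ℝ using ⟨hy, hf.2 y⟩ with b
  norm_cast
  rw [inner_sub_left]
  constructor <;> intro h <;> linarith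

lemma EConvex.convex_preimage_Iic (hconv : EConvex f) (c : ℝ) :
    Convex ℝ (f ⁻¹' Set.Iic (c : EReal)) := by
  intro x hx y hy a b ha hb hab
  calc f (a • x + b • y) ≤ (a : EReal) * f x + (b : EReal) * f y := hconv x y a b ha hb hab
    _ ≤ (a : EReal) * c + (b : EReal) * c :=
      add_le_add (mul_le_mul_of_nonneg_left hx (by exact_mod_cast ha))
        (mul_le_mul_of_nonneg_left hy (by exact_mod_cast hb))
    _ = c := by norm_cast; rw [← add_mul, hab, one_mul]

lemma EConvex.le_of_weakTendsto {ι : Type*} {l : Filter ι} [l.NeBot] [CompleteSpace E]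
    (hconv : EConvex f) (hlsc : LowerSemicontinuous f) {z : ι → E} {w : E}
    (hz : WeakTendsto z l w) {c : ι → ℝ} {c₀ : ℝ} (hc : Tendsto c l (𝓝 c₀))
    (hle : ∀ᶠ i in l, f (z i) ≤ c i) : f w ≤ c₀ := by
  refine EReal.le_of_forall_lt_iff_le.1 fun d hd => ?_
  refine (hconv.convex_preimage_Iic d).mem_of_weakTendsto (hlsc.isClosed_preimage d) hz ?_
  filter_upwards [hc.eventually (gt_mem_nhds (EReal.coe_lt_coe_iff.1 hd)), hle] with i hci hi
  exact hi.trans (EReal.coe_le_coe_iff.2 hci.le)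

end ConvexAnalysis

lemma tendsto_of_add_le_of_nonneg {u d : ℕ → ℝ} (hu : ∀ n, 0 ≤ u n)
    (hd : ∀ n, 0 ≤ d n) (h : ∀ n, u (n + 1) + d n ≤ u n) :
    (∃ r, Tendsto u atTop (𝓝 r)) ∧ Tendsto d atTop (𝓝 0) := by
  have hanti : Antitone u := antitone_nat_of_succ_le fun n => by linarith [h n, hd n]
  have hr := tendsto_atTop_ciInf hanti ⟨0, by rintro _ ⟨n, rfl⟩; exact hu n⟩
  have hdu : ∀ n, d n ≤ u n - u (n + 1) := fun n => by linarith [h n]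
  refine ⟨⟨_, hr⟩, squeeze_zero hd hdu ?_⟩
  simpa using hr.sub (hr.comp (tendsto_add_atTop_nat 1))

section LinearizedAugmentedLagrangian

variable {X K : Type*} [NormedAddCommGroup X] [InnerProductSpace ℝ X] [CompleteSpace X]
  [NormedAddCommGroup K] [InnerProductSpace ℝ K] [CompleteSpace K]
  {f : X → EReal} {A : X →L[ℝ] K}

/-- Karush–Kuhn–Tucker pairs of the problem `min f x` subject to `A x = 0`. -/
def kktSet (f : X → EReal) (A : X →L[ℝ] K) : Set (X × K) :=
  {w | A w.1 = 0 ∧ A.adjoint w.2 ∈ esubdiff f w.1}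

lemma inner_adjoint_eq_zero {x : X} (hx : A x = 0) (ν : K) : ⟪x, A.adjoint ν⟫_ℝ = 0 := by
  rw [ContinuousLinearMap.adjoint_inner_right, hx, inner_zero_left]

lemma fst_mem_argminSet_of_mem_kktSet (hf : EProper f) {w : X × K} (hw : w ∈ kktSet f A) :
    w.1 ∈ argminSet (fun x => f x + eind ({0} : Set K) (A x)) := by
  intro y
  simp only [eind, Set.mem_singleton_iff, hw.1, if_true, add_zero]
  by_cases hy : A y = 0
  · rw [if_pos hy, add_zero]
    have hsub := hw.2 y
    rwa [inner_sub_left, inner_adjoint_eq_zero hy, inner_adjoint_eq_zero hw.1, sub_zero,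
      EReal.coe_zero, zero_add] at hsub
  · rw [if_neg hy, EReal.add_top_of_ne_bot (hf.2 y)]
    exact le_top

lemma snd_mem_argminSet_of_mem_kktSet (hf : EProper f) {w : X × K} (hw : w ∈ kktSet f A) :
    w.2 ∈ argminSet (fun ν => econj f (A.adjoint ν)) := fun μ =>
  calc econj f (A.adjoint w.2) ≤ ↑⟪w.1, A.adjoint w.2⟫_ℝ - f w.1 :=
        (hf.mem_esubdiff_iff_econj_le (hf.ne_top_of_mem_esubdiff hw.2)).1 hw.2
    _ = ↑⟪w.1, A.adjoint μ⟫_ℝ - f w.1 := by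
        rw [inner_adjoint_eq_zero hw.1, inner_adjoint_eq_zero hw.1]
    _ ≤ econj f (A.adjoint μ) := le_econj f _ _

lemma mem_kktSet_of_iInf_eq_neg_iInf (hf : EProper f) {x : X} {ν : K}
    (hx : x ∈ argminSet (fun x => f x + eind ({0} : Set K) (A x)))
    (hν : ν ∈ argminSet (fun ν => econj f (A.adjoint ν)))
    (hgap : (⨅ x, (f x + eind ({0} : Set K) (A x))) = - ⨅ ν, econj f (A.adjoint ν)) :
    (x, ν) ∈ kktSet f A := by
  have hxmin : f x + eind ({0} : Set K) (A x) = ⨅ x, (f x + eind ({0} : Set K) (A x)) :=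
    le_antisymm (le_iInf hx) (iInf_le _ x)
  have hνmin : econj f (A.adjoint ν) = ⨅ ν, econj f (A.adjoint ν) :=
    le_antisymm (le_iInf hν) (iInf_le _ ν)
  have hval : f x + eind ({0} : Set K) (A x) = - econj f (A.adjoint ν) := by
    rw [hxmin, hgap, hνmin]
  have hconj : econj f (A.adjoint ν) ≠ ⊥ := by
    obtain ⟨⟨x₀, hx₀⟩, hbot⟩ := hf
    have := le_econj f x₀ (A.adjoint ν)
    lift f x₀ to ℝ using ⟨hx₀, hbot x₀⟩ with a
    exact ne_bot_of_le_ne_bot (by norm_cast; exact EReal.coe_ne_bot _) this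
  have hfin : f x + eind ({0} : Set K) (A x) ≠ ⊤ := by
    rwa [hval, Ne, EReal.neg_eq_top_iff]
  have hAx : A x = 0 := by
    by_contra hAx
    simp [eind, hAx, EReal.add_top_of_ne_bot (hf.2 x)] at hfin
  simp only [eind, Set.mem_singleton_iff, hAx, if_true, add_zero] at hval hfin
  refine ⟨hAx, (hf.mem_esubdiff_iff_econj_le hfin).2 ?_⟩
  rw [inner_adjoint_eq_zero hAx, hval, EReal.coe_zero, zero_sub, neg_neg]

lemma norm_sub_sq_add_le_of_mem_kktSet (hf : EProper f) {w : X × K} (hw : w ∈ kktSet f A)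
    {x x' : X} {ν : K} (hx' : x - A.adjoint (A x) + A.adjoint ν - x' ∈ esubdiff f x') :
    ‖x' - w.1‖ ^ 2 + ‖ν - A x' - w.2‖ ^ 2 + (1 - ‖A‖ ^ 2) * ‖x' - x‖ ^ 2
      ≤ ‖x - w.1‖ ^ 2 - ‖A x‖ ^ 2 + ‖ν - w.2‖ ^ 2 := by
  obtain ⟨hAw, hw⟩ := hw
  have hmono := hf.inner_sub_sub_nonneg_of_mem_esubdiff hx' hw
  have hAe : ∀ y, A (y - w.1) = A y := fun y => by rw [map_sub, hAw, sub_zero]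
  have hvec : x - A.adjoint (A x) + A.adjoint ν - x' - A.adjoint w.2
      = ((x - w.1) - (x' - w.1)) - A.adjoint (A (x - w.1)) + A.adjoint (ν - w.2) := by
    rw [hAe, map_sub]; abel
  rw [hvec] at hmono
  rw [show ν - A x' - w.2 = (ν - w.2) - A (x' - w.1) by rw [hAe]; abel,
    show x' - x = (x' - w.1) - (x - w.1) by abel, ← hAe x]
  set e := x - w.1
  set e' := x' - w.1
  set d := ν - w.2
  have hop : ‖A e' - A e‖ ^ 2 ≤ ‖A‖ ^ 2 * ‖e' - e‖ ^ 2 := by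
    rw [← map_sub, ← mul_pow]
    exact pow_le_pow_left₀ (norm_nonneg _) (A.le_opNorm _) 2
  rw [inner_add_right, inner_sub_right, inner_sub_right, ContinuousLinearMap.adjoint_inner_right,
    ContinuousLinearMap.adjoint_inner_right, real_inner_self_eq_norm_sq,
    real_inner_comm d (A e')] at hmono
  rw [norm_sub_sq_real, norm_sub_sq_real] at hop
  rw [norm_sub_sq_real d, norm_sub_sq_real e']
  nlinarith

/-- The primal step enters only through the subgradient inclusion
`u - prox_f u ∈ ∂f(prox_f u)` that it produces. -/
structure IsLALSequence (f : X → EReal) (A : X →L[ℝ] K) (x : ℕ → X) (ν : ℕ → K) :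
    Prop where
  mem_esubdiff (n : ℕ) :
    x n - A.adjoint (A (x n)) + A.adjoint (ν n) - x (n + 1) ∈ esubdiff f (x (n + 1))
  dual_update (n : ℕ) : ν (n + 1) = ν n - A (x (n + 1))

variable {x : ℕ → X} {ν : ℕ → K}

lemma lal_fejer (hf : EProper f) (hA : ‖A‖ < 1)
    (h : IsLALSequence f A x ν) {w : X × K} (hw : w ∈ kktSet f A) :
    (∃ r, Tendsto (fun n => ‖x n - w.1‖ ^ 2 - ‖A (x n)‖ ^ 2 + ‖ν n - w.2‖ ^ 2)
      atTop (𝓝 r)) ∧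
    Tendsto (fun n => (1 - ‖A‖ ^ 2) * ‖x (n + 1) - x n‖ ^ 2 + ‖A (x (n + 1))‖ ^ 2)
      atTop (𝓝 0) := by
  have hA2 : ‖A‖ ^ 2 ≤ 1 := pow_le_one₀ (norm_nonneg A) hA.le
  refine tendsto_of_add_le_of_nonneg (fun n => ?_)
    (fun n => add_nonneg (mul_nonneg (by linarith) (sq_nonneg _)) (sq_nonneg _)) (fun n => ?_)
  · have hop : ‖A (x n - w.1)‖ ^ 2 ≤ ‖A‖ ^ 2 * ‖x n - w.1‖ ^ 2 := by
      rw [← mul_pow]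
      exact pow_le_pow_left₀ (norm_nonneg _) (A.le_opNorm _) 2
    rw [map_sub, hw.1, sub_zero] at hop
    nlinarith [sq_nonneg ‖x n - w.1‖, sq_nonneg ‖ν n - w.2‖]
  · have := norm_sub_sq_add_le_of_mem_kktSet hf hw (h.mem_esubdiff n)
    rw [← h.dual_update n] at this
    linarith

lemma lal_step_and_residual_tendsto_zero (hf : EProper f) (hA : ‖A‖ < 1)
    (h : IsLALSequence f A x ν) (hS : (kktSet f A).Nonempty) :
    Tendsto (fun n => ‖x (n + 1) - x n‖) atTop (𝓝 0) ∧
    Tendsto (fun n => ‖A (x n)‖) atTop (𝓝 0) := by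
  obtain ⟨w, hw⟩ := hS
  obtain ⟨-, hd⟩ := lal_fejer hf hA h hw
  have hA2 : 0 < 1 - ‖A‖ ^ 2 := by nlinarith [norm_nonneg A]
  have hΔ : Tendsto (fun n => ‖x (n + 1) - x n‖ ^ 2) atTop (𝓝 0) := by
    refine squeeze_zero (fun n => sq_nonneg _) (fun n => ?_)
      (by simpa using hd.div_const (1 - ‖A‖ ^ 2))
    rw [le_div_iff₀ hA2]
    nlinarith [sq_nonneg ‖A (x (n + 1))‖]
  have hAx : Tendsto (fun n => ‖A (x (n + 1))‖ ^ 2) atTop (𝓝 0) :=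
    squeeze_zero (fun n => sq_nonneg _) (fun n => by
      nlinarith [sq_nonneg ‖x (n + 1) - x n‖]) hd
  constructor
  · simpa [Real.sqrt_sq (norm_nonneg _)] using hΔ.sqrt
  · exact (tendsto_add_atTop_iff_nat 1).1 (by simpa [Real.sqrt_sq (norm_nonneg _)] using hAx.sqrt)

lemma lal_exists_tendsto_norm_sub (hf : EProper f) (hA : ‖A‖ < 1)
    (h : IsLALSequence f A x ν) {w : X × K} (hw : w ∈ kktSet f A) :
    ∃ r, Tendsto (fun n => ‖WithLp.toLp 2 (x n, ν n) - WithLp.toLp 2 w‖) atTop (𝓝 r) := by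
  obtain ⟨⟨r, hr⟩, -⟩ := lal_fejer hf hA h hw
  have hAx := (lal_step_and_residual_tendsto_zero hf hA h ⟨w, hw⟩).2
  have hsq : Tendsto (fun n => ‖WithLp.toLp 2 (x n, ν n) - WithLp.toLp 2 w‖ ^ 2)
      atTop (𝓝 r) := by
    convert hr.add (hAx.pow 2) using 1
    · ext n
      rw [WithLp.prod_norm_sq_eq_of_L2]
      simp only [WithLp.fst, WithLp.snd, WithLp.ofLp_sub, Prod.fst_sub, Prod.snd_sub]
      ring
    · simp
  exact ⟨√r, by simpa [Real.sqrt_sq (norm_nonneg _)] using hsq.sqrt⟩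

lemma lal_tendsto_inner_subgradient {C : ℝ} (hxC : ∀ n, ‖x n‖ ≤ C)
    (hνC : ∀ n, ‖ν n‖ ≤ C) (hΔ : Tendsto (fun n => ‖x (n + 1) - x n‖) atTop (𝓝 0))
    (hAx : Tendsto (fun n => ‖A (x n)‖) atTop (𝓝 0)) {U : Ultrafilter ℕ}
    (hU : (U : Filter ℕ) ≤ atTop) {νh : K} (hνU : WeakTendsto ν (U : Filter ℕ) νh)
    (y : X) :
    Tendsto (fun n =>
        ⟪y - x (n + 1), x n - A.adjoint (A (x n)) + A.adjoint (ν n) - x (n + 1)⟫_ℝ)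
      U (𝓝 ⟪A y, νh⟫_ℝ) := by
  have hsplit : ∀ n,
      ⟪y - x (n + 1), x n - A.adjoint (A (x n)) + A.adjoint (ν n) - x (n + 1)⟫_ℝ =
        ⟪x n - x (n + 1), y - x (n + 1)⟫_ℝ - ⟪A (x n), A y - A (x (n + 1))⟫_ℝ
          + (⟪A y, ν n⟫_ℝ - ⟪A (x (n + 1)), ν n⟫_ℝ) := fun n => by
    rw [show x n - A.adjoint (A (x n)) + A.adjoint (ν n) - x (n + 1)
        = (x n - x (n + 1)) - A.adjoint (A (x n)) + A.adjoint (ν n) by abel]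
    rw [inner_add_right, inner_sub_right, ContinuousLinearMap.adjoint_inner_right,
      ContinuousLinearMap.adjoint_inner_right, map_sub, inner_sub_left (A y) _ (ν n),
      real_inner_comm (x n - x (n + 1)), real_inner_comm (A (x n))]
  have h₁ : Tendsto (fun n => ⟪x n - x (n + 1), y - x (n + 1)⟫_ℝ) atTop (𝓝 0) :=
    tendsto_inner_zero_of_tendsto_norm_zero (C := ‖y‖ + C) (by simpa [norm_sub_rev] using hΔ)
      (Eventually.of_forall fun n => (norm_sub_le _ _).trans (by linarith [hxC (n + 1)]))
  have h₂ : Tendsto (fun n => ⟪A (x n), A y - A (x (n + 1))⟫_ℝ) atTop (𝓝 0) :=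
    tendsto_inner_zero_of_tendsto_norm_zero (C := ‖A y‖ + ‖A‖ * C) hAx
      (Eventually.of_forall fun n => (norm_sub_le _ _).trans (add_le_add le_rfl
        ((A.le_opNorm _).trans (mul_le_mul_of_nonneg_left (hxC _) (norm_nonneg A)))))
  have h₃ : Tendsto (fun n => ⟪A (x (n + 1)), ν n⟫_ℝ) atTop (𝓝 0) :=
    tendsto_inner_zero_of_tendsto_norm_zero (hAx.comp (tendsto_add_atTop_nat 1))
      (Eventually.of_forall hνC)
  have h₄ : Tendsto (fun n => ⟪A y, ν n⟫_ℝ) U (𝓝 ⟪A y, νh⟫_ℝ) := by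
    simpa only [real_inner_comm (A y)] using hνU (A y)
  have hlim := ((h₁.sub h₂).mono_left hU).add (h₄.sub (h₃.mono_left hU))
  simp only [hsplit, sub_zero, zero_add] at hlim ⊢
  exact hlim

lemma lal_mem_kktSet_of_weakTendsto (hf : Gamma0 f) (h : IsLALSequence f A x ν)
    {C : ℝ} (hxC : ∀ n, ‖x n‖ ≤ C) (hνC : ∀ n, ‖ν n‖ ≤ C)
    (hΔ : Tendsto (fun n => ‖x (n + 1) - x n‖) atTop (𝓝 0))
    (hAx : Tendsto (fun n => ‖A (x n)‖) atTop (𝓝 0)) {U : Ultrafilter ℕ}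
    (hU : (U : Filter ℕ) ≤ atTop)
    {xh : X} {νh : K} (hxU : WeakTendsto x (U : Filter ℕ) xh)
    (hνU : WeakTendsto ν (U : Filter ℕ) νh) :
    (xh, νh) ∈ kktSet f A := by
  have hAxh : A xh = 0 :=
    (hxU.map A).unique (weakTendsto_of_tendsto_norm_sub (by simpa using hAx.mono_left hU))
  have hx'U : WeakTendsto (fun n => x (n + 1)) U xh :=
    hxU.congr_of_tendsto_norm_sub (hΔ.mono_left hU)
  refine ⟨hAxh, fun y => ?_⟩
  rcases eq_or_ne (f y) ⊤ with hy | hy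
  · rw [hy]; exact le_top
  lift f y to ℝ using ⟨hy, hf.1.2 y⟩ with b hb
  have hle : f xh ≤ ↑(b - ⟪A y, νh⟫_ℝ) :=
    hf.2.2.le_of_weakTendsto hf.2.1 hx'U (tendsto_const_nhds.sub
      (lal_tendsto_inner_subgradient hxC hνC hΔ hAx hU hνU y))
      (Eventually.of_forall fun n => le_coe_sub_inner_of_mem_esubdiff (h.mem_esubdiff n) hb.symm)
  have hinner : ⟪y - xh, A.adjoint νh⟫_ℝ = ⟪A y, νh⟫_ℝ := by
    rw [ContinuousLinearMap.adjoint_inner_right, map_sub, hAxh, sub_zero]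
  calc ↑⟪y - xh, A.adjoint νh⟫_ℝ + f xh
      ≤ ↑⟪A y, νh⟫_ℝ + ↑(b - ⟪A y, νh⟫_ℝ) := by
        rw [hinner]; exact add_le_add le_rfl hle
    _ = b := by norm_cast; ring

theorem lal_exists_weakTendsto (hf : Gamma0 f) (hA : ‖A‖ < 1) (hS : (kktSet f A).Nonempty)
    (h : IsLALSequence f A x ν) :
    ∃ w ∈ kktSet f A, ∀ v : X × K,
      Tendsto (fun n => ⟪x n - w.1, v.1⟫_ℝ + ⟪ν n - w.2, v.2⟫_ℝ) atTop (𝓝 0) := by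
  set z : ℕ → WithLp 2 (X × K) := fun n => WithLp.toLp 2 (x n, ν n)
  obtain ⟨hΔ, hAx⟩ := lal_step_and_residual_tendsto_zero hf.1 hA h hS
  obtain ⟨w₀, hw₀⟩ := hS
  obtain ⟨r₀, hr₀⟩ := lal_exists_tendsto_norm_sub hf.1 hA h hw₀
  obtain ⟨M, hM⟩ := hr₀.bddAbove_range
  have hz : ∀ n, ‖z n‖ ≤ M + ‖WithLp.toLp 2 w₀‖ := fun n => by
    linarith [norm_le_norm_sub_add (z n) (WithLp.toLp 2 w₀), hM ⟨n, rfl⟩]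
  obtain ⟨w, hw, hzw⟩ := exists_weakTendsto_of_opial (S := WithLp.ofLp ⁻¹' kktSet f A)
    ⟨WithLp.toLp 2 w₀, hw₀⟩ (fun w hw => lal_exists_tendsto_norm_sub hf.1 hA h hw)
    (fun U w hU hzw => lal_mem_kktSet_of_weakTendsto hf h
      (fun n => (WithLp.norm_fst_le (x := z n)).trans (hz n))
      (fun n => (WithLp.norm_snd_le (x := z n)).trans (hz n)) hΔ hAx hU hzw.fst hzw.snd)
  refine ⟨WithLp.ofLp w, hw, fun v => ?_⟩
  convert (hzw (WithLp.toLp 2 v)).sub_const ⟪w, WithLp.toLp 2 v⟫_ℝ using 1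
  · ext n
    simp only [WithLp.prod_inner_apply, inner_sub_left]
    ring
  · simp

end LinearizedAugmentedLagrangian

/-- Proposition 2(d): weak convergence of the LAL iteration for `‖A‖_op < 1`.
Under primal/dual attainment and zero duality gap, the Picard iteration of `T_LAL`
converges weakly (in the product Hilbert space) to a point of `S_pLAL × S_dLAL`. -/
theorem statement3
    {X K : Type*} [NormedAddCommGroup X] [InnerProductSpace ℝ X] [CompleteSpace X]
    [NormedAddCommGroup K] [InnerProductSpace ℝ K] [CompleteSpace K]
    (f : X → EReal) (hf : Gamma0 f) (A : X →L[ℝ] K) (hA : ‖A‖ < 1)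
    (SpLAL : Set X) (hSpdef : SpLAL = argminSet (fun x => f x + eind ({0} : Set K) (A x)))
    (SdLAL : Set K) (hSddef : SdLAL = argminSet (fun ν => econj f (A.adjoint ν)))
    (hSp : SpLAL.Nonempty) (hSd : SdLAL.Nonempty)
    (hminmin : (⨅ x : X, (f x + eind ({0} : Set K) (A x)))
      = - ⨅ ν : K, econj f (A.adjoint ν))
    (proxf : X → X) (hproxf : ∀ x, IsProxPt f x (proxf x))
    (T : X × K → X × K)
    (hT : ∀ w : X × K, T w =
      (proxf (w.1 - A.adjoint (A w.1) + A.adjoint w.2),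
       w.2 - A (proxf (w.1 - A.adjoint (A w.1) + A.adjoint w.2))))
    (z : ℕ → X × K) (hz : ∀ n, z (n + 1) = T (z n)) :
    ∃ w : X × K, w.1 ∈ SpLAL ∧ w.2 ∈ SdLAL ∧
      ∀ v : X × K,
        Tendsto (fun n => ⟪(z n).1 - w.1, v.1⟫_ℝ + ⟪(z n).2 - w.2, v.2⟫_ℝ)
          atTop (𝓝 0) := by
  obtain ⟨xst, hxst⟩ := hSp
  obtain ⟨νst, hνst⟩ := hSd
  subst hSpdef hSddef
  have hkkt : (xst, νst) ∈ kktSet f A := mem_kktSet_of_iInf_eq_neg_iInf hf.1 hxst hνst hminmin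
  have hlal : IsLALSequence f A (fun n => (z n).1) (fun n => (z n).2) :=
    ⟨fun n => by rw [hz n, hT]; exact (hproxf _).sub_mem_esubdiff hf.1 hf.2.2,
      fun n => by rw [hz n, hT]⟩
  obtain ⟨w, hw, hlim⟩ := lal_exists_weakTendsto hf hA ⟨_, hkkt⟩ hlal
  exact ⟨w, fst_mem_argminSet_of_mem_kktSet hf.1 hw, snd_mem_argminSet_of_mem_kktSet hf.1 hw,
    hlim⟩
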